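/- arXiv:1812.02544 — 2 statements merged into one kernel-verified Lean document; each statement's English description precedes it below -/
import Mathlib

section
/- For every k ∈ {1,…,n} one has C(λ_k) = |g| · A′(λ_k) · ( φ_k/m + f_k ), where f_k = c_{m−1}/(m·λ_k) − (|g|/(m·λ_k))·Σ_{ℓ≠k} λ_k^m/(λ_ℓ^m − λ_k^m). In particular, if |g| ≠ 0, the quantities θ_k := C(λ_k)/(|g|·A′(λ_k)) satisfy θ_k = φ_k/m + f_k(λ_1,…,λ_n). (This is the spinless case of the generalized Sklyanin formula: the variables θ_k = s(λ_k) with s(z) = C(z)/(|g|A′(z)) differ from φ_k/m only by a function of the λ's.) -/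
/-!
`L̃` is block diagonal, its `j`-th block being `λⱼ` times the cyclic shift `S` of `ℤ/mℤ`. The
characteristic matrix `X - aS` has the explicit adjugate `(X ^ (m-1-d) a ^ d)_{h,i}` with
`d = i - h`: indeed `(X - aS) · adj = (X ^ m - a ^ m) · 1`, which also forces
`det (X - aS) = X ^ m - a ^ m`. Hence `A(z) = ∏ⱼ (z ^ m - λⱼ ^ m)`, and at `z = λₖ` the adjugate of
`z - L̃` survives only on block `k`, where every entry equals
`κ = λₖ ^ (m-1) ∏_{j≠k} (λₖ ^ m - λⱼ ^ m) = A′(λₖ) / m`. So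
`C(λₖ) = |g| κ Σⱼ Q̃_{(0,j),(-1,k)}`, and this column sum of `Q̃` is
`φₖ + (c_{m-1} - |g| Σ_{l≠k} λₖ ^ m / (λ_l ^ m - λₖ ^ m)) / λₖ`.
-/

open Matrix BigOperators

noncomputable section

/-- The block matrix `L̃` with diagonal blocks `Λ = diag(λ₁,…,λₙ)` at positions `(h, h+1)`:
its entry in row `(h,j)` and column `(i,k)` is `λⱼ` if `k = j` and `i = h + 1` in `ℤ/mℤ`,
and `0` otherwise. -/
def Ltilde (m n : ℕ) (lam : Fin n → ℂ) :
    Matrix (ZMod m × Fin n) (ZMod m × Fin n) ℂ :=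
  Matrix.of fun p q => if q.2 = p.2 ∧ q.1 = p.1 + 1 then lam p.2 else 0

/-- `|g| = g₀ + g₁ + ⋯ + g_{m-1}`. -/
def gAbs (m : ℕ) (g : ZMod m → ℂ) : ℂ :=
  ∑ s ∈ Finset.range m, g (s : ZMod m)

/-- `cᵢ = Σ_{r=0}^{i} g_r − Σ_{s=0}^{m−1} ((m−s)/m)·g_s`, the index `i` read modulo `m`. -/
def cConst (m : ℕ) (g : ZMod m → ℂ) (i : ZMod m) : ℂ :=
  (∑ r ∈ Finset.range (i.val + 1), g (r : ZMod m)) -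
    ∑ s ∈ Finset.range m, (((m : ℂ) - (s : ℂ)) / (m : ℂ)) * g (s : ZMod m)

/-- The (spinless) matrix `Q̃`: its entry in row `(h,j)` and column `(i,k)` vanishes unless
`h = i + 1` in `ℤ/mℤ`, in which case it equals `φⱼ + cᵢ/λⱼ` if `k = j`, and
`−|g|·λⱼ^{m−i−1}·λₖ^{i}/(λⱼ^m − λₖ^m)` if `k ≠ j` (where `i` is taken as its representative
in `{0,…,m−1}`). -/
def Qtilde (m n : ℕ) (g : ZMod m → ℂ) (lam phi : Fin n → ℂ) :
    Matrix (ZMod m × Fin n) (ZMod m × Fin n) ℂ :=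
  Matrix.of fun p q =>
    if p.1 = q.1 + 1 then
      if q.2 = p.2 then phi p.2 + cConst m g q.1 / lam p.2
      else -(gAbs m g) * lam p.2 ^ (m - q.1.val - 1) * lam q.2 ^ q.1.val /
        (lam p.2 ^ m - lam q.2 ^ m)
    else 0

/-- `A(z) = det(z·1 − L̃)`. -/
def Afun (m n : ℕ) [NeZero m] (lam : Fin n → ℂ) (z : ℂ) : ℂ :=
  (z • (1 : Matrix (ZMod m × Fin n) (ZMod m × Fin n) ℂ) - Ltilde m n lam).det

/-- `D(z) = tr(Q̃ · adj(z·1 − L̃))`. -/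
def Dfun (m n : ℕ) [NeZero m] (g : ZMod m → ℂ) (lam phi : Fin n → ℂ) (z : ℂ) : ℂ :=
  Matrix.trace (Qtilde m n g lam phi *
    (z • (1 : Matrix (ZMod m × Fin n) (ZMod m × Fin n) ℂ) - Ltilde m n lam).adjugate)

/-- `C(z) = w̃ · Q̃ · adj(z·1 − L̃) · ṽ`, where `ṽ` has entry `1` at each index `(0,j)` and `0`
elsewhere, and `w̃` has entry `|g|` at each index `(0,j)` and `0` elsewhere. -/
def Cfun (m n : ℕ) [NeZero m] (g : ZMod m → ℂ) (lam phi : Fin n → ℂ) (z : ℂ) : ℂ :=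
  (fun p : ZMod m × Fin n => if p.1 = 0 then gAbs m g else 0) ⬝ᵥ
    ((Qtilde m n g lam phi *
        (z • (1 : Matrix (ZMod m × Fin n) (ZMod m × Fin n) ℂ) - Ltilde m n lam).adjugate) *ᵥ
      fun p : ZMod m × Fin n => if p.1 = 0 then (1 : ℂ) else 0)

open Polynomial

theorem ZMod.val_sub_one_of_ne_zero {m : ℕ} [NeZero m] {d : ZMod m} (hd : d ≠ 0) :
    (d - 1).val = d.val - 1 := by
  obtain ⟨k, rfl⟩ := Nat.exists_eq_succ_of_ne_zero (NeZero.ne m)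
  exact Fin.val_sub_one_of_ne_zero hd

theorem ZMod.val_neg_one_of_neZero (m : ℕ) [NeZero m] : (-1 : ZMod m).val = m - 1 := by
  obtain ⟨k, rfl⟩ := Nat.exists_eq_succ_of_ne_zero (NeZero.ne m)
  exact ZMod.val_neg_one k

namespace Matrix

variable {ι o R : Type*} [Fintype ι] [DecidableEq ι] [Fintype o] [DecidableEq o] [CommRing R]

theorem adjugate_eq_of_mul_eq_det_smul [IsDomain R] {A B : Matrix ι ι R} (hA : A.det ≠ 0)
    (h : A * B = A.det • 1) : A.adjugate = B := by
  refine smul_right_injective _ hA ?_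
  calc A.det • A.adjugate = A.adjugate * (A * B) := by rw [h, Matrix.mul_smul, Matrix.mul_one]
    _ = A.det • B := by rw [← Matrix.mul_assoc, adjugate_mul, smul_mul, Matrix.one_mul]

theorem adjugate_blockDiagonal [IsDomain R] (M : o → Matrix ι ι R) (hM : ∀ j, (M j).det ≠ 0) :
    (blockDiagonal M).adjugate =
      blockDiagonal fun j => (∏ j' ∈ Finset.univ.erase j, (M j').det) • (M j).adjugate := by
  have hdet : (blockDiagonal M).det = ∏ j, (M j).det := det_blockDiagonal M
  refine adjugate_eq_of_mul_eq_det_smul (hdet ▸ Finset.prod_ne_zero_iff.mpr fun j _ => hM j) ?_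
  rw [← blockDiagonal_mul, hdet, ← blockDiagonal_one, ← blockDiagonal_smul]
  congr 1
  ext1 j
  rw [Matrix.mul_smul, mul_adjugate, smul_smul, Finset.prod_erase_mul _ _ (Finset.mem_univ j)]
  rfl

theorem charmatrix_blockDiagonal (M : o → Matrix ι ι R) :
    charmatrix (blockDiagonal M) = blockDiagonal fun j => charmatrix (M j) := by
  ext ⟨h, j⟩ ⟨i, k⟩
  by_cases hjk : j = k
  · subst hjk
    by_cases hhi : h = i
    · subst hhi; simp
    · simp [charmatrix_apply_ne, hhi]
  · have hne : (h, j) ≠ (i, k) := fun e => hjk (congrArg Prod.snd e)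
    simp [charmatrix_apply_ne _ _ _ hne, blockDiagonal_apply_ne _ _ _ hjk]

theorem charpoly_blockDiagonal (M : o → Matrix ι ι R) :
    (blockDiagonal M).charpoly = ∏ j, (M j).charpoly := by
  rw [charpoly, charmatrix_blockDiagonal, det_blockDiagonal]; rfl

theorem charmatrix_map_eval (M : Matrix ι ι R) (z : R) :
    (charmatrix M).map (eval z) = z • (1 : Matrix ι ι R) - M := by
  ext i j
  by_cases hij : i = j
  · subst hij; simp
  · simp [charmatrix_apply_ne _ _ _ hij, one_apply_ne hij]

theorem det_smul_one_sub_eq_eval_charpoly (M : Matrix ι ι R) (z : R) :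
    (z • 1 - M).det = M.charpoly.eval z := by
  rw [charpoly, ← coe_evalRingHom, RingHom.map_det, RingHom.mapMatrix_apply, coe_evalRingHom,
    charmatrix_map_eval]

theorem adjugate_smul_one_sub_eq_map_eval (M : Matrix ι ι R) (z : R) :
    (z • 1 - M).adjugate = (charmatrix M).adjugate.map (eval z) := by
  rw [← coe_evalRingHom, ← RingHom.mapMatrix_apply, RingHom.map_adjugate, RingHom.mapMatrix_apply,
    coe_evalRingHom, charmatrix_map_eval]

end Matrix

def cyclicShift {R : Type*} [Zero R] (m : ℕ) (a : R) : Matrix (ZMod m) (ZMod m) R :=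
  of fun h i => if i = h + 1 then a else 0

def cyclicShiftAdjEntry {R : Type*} [CommSemiring R] (m : ℕ) (a : R) (d : ZMod m) : R[X] :=
  X ^ (m - 1 - d.val) * C (a ^ d.val)

def cyclicShiftAdj {R : Type*} [CommSemiring R] (m : ℕ) (a : R) : Matrix (ZMod m) (ZMod m) R[X] :=
  of fun h i => cyclicShiftAdjEntry m a (i - h)

section CyclicShift

variable (m : ℕ) [NeZero m]

theorem X_mul_cyclicShiftAdjEntry_sub {R : Type*} [CommRing R] (a : R) (d : ZMod m) :
    X * cyclicShiftAdjEntry m a d - C a * cyclicShiftAdjEntry m a (d - 1) =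
      if d = 0 then X ^ m - C (a ^ m) else 0 := by
  have hm : 0 < m := Nat.pos_of_ne_zero (NeZero.ne m)
  unfold cyclicShiftAdjEntry
  split_ifs with hd
  · obtain ⟨s, hs⟩ : ∃ s, m = s + 1 := ⟨m - 1, by omega⟩
    rw [hd, zero_sub, ZMod.val_neg_one_of_neZero, ZMod.val_zero, hs, Nat.add_sub_cancel,
      Nat.sub_self, Nat.sub_zero, pow_zero, map_one, mul_one]
    simp only [pow_succ, map_mul]
    ring
  · have hd1 : 1 ≤ d.val := Nat.one_le_iff_ne_zero.mpr ((ZMod.val_ne_zero d).mpr hd)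
    have hlt := ZMod.val_lt d
    rw [ZMod.val_sub_one_of_ne_zero hd]
    obtain ⟨t, ht⟩ : ∃ t, d.val = t + 1 := ⟨d.val - 1, by omega⟩
    obtain ⟨s, hs⟩ : ∃ s, m = s + t + 2 := ⟨m - t - 2, by omega⟩
    rw [ht, hs, Nat.add_sub_cancel, show s + t + 2 - 1 - (t + 1) = s by omega,
      show s + t + 2 - 1 - t = s + 1 by omega]
    simp only [pow_succ, map_mul]
    ring

theorem charmatrix_cyclicShift_mul_cyclicShiftAdj {R : Type*} [CommRing R] (a : R) :
    charmatrix (cyclicShift m a) * cyclicShiftAdj m a = (X ^ m - C (a ^ m)) • 1 := by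
  refine Matrix.ext fun h i => ?_
  have hterm : ∀ b, charmatrix (cyclicShift m a) h b * cyclicShiftAdj m a b i =
      (if h = b then X * cyclicShiftAdjEntry m a (i - b) else 0) -
        if b = h + 1 then C a * cyclicShiftAdjEntry m a (i - b) else 0 := by
    intro b
    rw [charmatrix_apply, diagonal_apply, cyclicShift, of_apply, cyclicShiftAdj, of_apply,
      apply_ite C, map_zero, sub_mul, ite_mul, ite_mul, zero_mul]
  rw [mul_apply, Finset.sum_congr rfl fun b _ => hterm b, Finset.sum_sub_distrib,
    Finset.sum_ite_eq, Finset.sum_ite_eq', if_pos (Finset.mem_univ _), if_pos (Finset.mem_univ _),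
    sub_add_eq_sub_sub, X_mul_cyclicShiftAdjEntry_sub, Matrix.smul_apply, one_apply, smul_ite,
    smul_eq_mul, mul_one, smul_zero]
  exact if_congr (sub_eq_zero.trans eq_comm) rfl rfl

variable {K : Type*} [Field K] {a : K}

theorem charpoly_cyclicShift (ha : a ≠ 0) : (cyclicShift m a).charpoly = X ^ m - C (a ^ m) := by
  set M := charmatrix (cyclicShift m a)
  have hsmul : M.det • cyclicShiftAdj m a = (X ^ m - C (a ^ m)) • M.adjugate := by
    calc M.det • cyclicShiftAdj m a = M.adjugate * M * cyclicShiftAdj m a := by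
          rw [adjugate_mul, smul_mul, Matrix.one_mul]
      _ = _ := by
          rw [Matrix.mul_assoc, charmatrix_cyclicShift_mul_cyclicShiftAdj, Matrix.mul_smul,
            Matrix.mul_one]
  -- At the entry `(1, 0)` the adjugate candidate is the unit `C (a ^ (m - 1))`, so
  -- `X ^ m - C (a ^ m)` divides the monic degree-`m` polynomial `M.det`.
  have hentry := congrFun (congrFun hsmul 1) 0
  have hlast : cyclicShiftAdj m a 1 0 = C (a ^ (m - 1)) := by
    rw [cyclicShiftAdj, of_apply, cyclicShiftAdjEntry, zero_sub, ZMod.val_neg_one_of_neZero,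
      Nat.sub_self, pow_zero, one_mul]
  rw [Matrix.smul_apply, Matrix.smul_apply, hlast, smul_eq_mul, smul_eq_mul] at hentry
  have hdvd : X ^ m - C (a ^ m) ∣ M.det :=
    (isUnit_C.mpr (pow_ne_zero _ ha).isUnit).dvd_mul_right.mp ⟨_, hentry⟩
  refine eq_of_monic_of_dvd_of_natDegree_le (monic_X_pow_sub_C _ (NeZero.ne m))
    (charpoly_monic _) hdvd ?_
  rw [charpoly_natDegree_eq_dim, ZMod.card, natDegree_X_pow_sub_C]

theorem adjugate_charmatrix_cyclicShift (ha : a ≠ 0) :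
    (charmatrix (cyclicShift m a)).adjugate = cyclicShiftAdj m a := by
  have hdet : (charmatrix (cyclicShift m a)).det = X ^ m - C (a ^ m) := charpoly_cyclicShift m ha
  refine adjugate_eq_of_mul_eq_det_smul ?_ ?_
  · rw [hdet]; exact X_pow_sub_C_ne_zero (Nat.pos_of_ne_zero (NeZero.ne m)) _
  · rw [hdet, charmatrix_cyclicShift_mul_cyclicShiftAdj]

end CyclicShift

def adjugateEntry {n : ℕ} (m : ℕ) (lam : Fin n → ℂ) (k : Fin n) : ℂ :=
  lam k ^ (m - 1) * ∏ j ∈ Finset.univ.erase k, (lam k ^ m - lam j ^ m)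

theorem Ltilde_eq_blockDiagonal (m n : ℕ) (lam : Fin n → ℂ) :
    Ltilde m n lam = blockDiagonal fun j => cyclicShift m (lam j) := by
  ext ⟨h, j⟩ ⟨i, k⟩
  by_cases hjk : j = k
  · subst hjk; simp [Ltilde, cyclicShift, blockDiagonal_apply_eq]
  · simp [Ltilde, blockDiagonal_apply_ne _ _ _ hjk, Ne.symm hjk]

section Sklyanin

variable {m n : ℕ} [NeZero m] {lam : Fin n → ℂ}

theorem charpoly_Ltilde (hlam : ∀ j, lam j ≠ 0) :
    (Ltilde m n lam).charpoly = ∏ j, (X ^ m - C (lam j ^ m)) := by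
  rw [Ltilde_eq_blockDiagonal, charpoly_blockDiagonal]
  exact Finset.prod_congr rfl fun j _ => charpoly_cyclicShift m (hlam j)

theorem Afun_eq_prod (hlam : ∀ j, lam j ≠ 0) :
    Afun m n lam = fun z => ∏ j, (z ^ m - lam j ^ m) := by
  ext z
  rw [Afun, det_smul_one_sub_eq_eval_charpoly, charpoly_Ltilde hlam, eval_prod]
  simp

theorem deriv_Afun (hlam : ∀ j, lam j ≠ 0) (k : Fin n) :
    deriv (Afun m n lam) (lam k) = m * adjugateEntry m lam k := by
  have hder : HasDerivAt (fun z : ℂ => ∏ j, (z ^ m - lam j ^ m))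
      (∑ j, (∏ j' ∈ Finset.univ.erase j, (lam k ^ m - lam j' ^ m)) • (m * lam k ^ (m - 1)))
      (lam k) :=
    HasDerivAt.fun_finsetProd fun j _ => (hasDerivAt_pow m (lam k)).sub_const _
  rw [Afun_eq_prod hlam, hder.deriv, Finset.sum_eq_single k, adjugateEntry, smul_eq_mul]
  · ring
  · intro j _ hjk
    rw [Finset.prod_eq_zero (Finset.mem_erase.mpr ⟨Ne.symm hjk, Finset.mem_univ k⟩)
      (sub_self _), zero_smul]
  · exact fun hk => absurd (Finset.mem_univ k) hk

theorem deriv_Afun_ne_zero (hlam : ∀ j, lam j ≠ 0)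
    (hsep : ∀ j k : Fin n, j ≠ k → lam j ^ m ≠ lam k ^ m) (k : Fin n) :
    deriv (Afun m n lam) (lam k) ≠ 0 := by
  rw [deriv_Afun hlam k, adjugateEntry]
  refine mul_ne_zero (Nat.cast_ne_zero.mpr (NeZero.ne m)) (mul_ne_zero (pow_ne_zero _ (hlam k)) ?_)
  exact Finset.prod_ne_zero_iff.mpr fun j hj =>
    sub_ne_zero.mpr (hsep k j (Ne.symm (Finset.mem_erase.mp hj).1))

theorem adjugate_sub_Ltilde (hlam : ∀ j, lam j ≠ 0) (k : Fin n) :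
    (lam k • 1 - Ltilde m n lam).adjugate =
      of fun p q => if p.2 = k ∧ q.2 = k then adjugateEntry m lam k else 0 := by
  rw [adjugate_smul_one_sub_eq_map_eval, Ltilde_eq_blockDiagonal, charmatrix_blockDiagonal,
    adjugate_blockDiagonal _ fun j => charpoly_monic _ |>.ne_zero]
  simp_rw [← charpoly.eq_1, charpoly_cyclicShift m (hlam _),
    adjugate_charmatrix_cyclicShift m (hlam _)]
  ext ⟨h, j⟩ ⟨i, j'⟩
  rw [map_apply, of_apply]
  by_cases hjj' : j = j'
  · subst hjj'
    rw [blockDiagonal_apply_eq]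
    by_cases hjk : j = k
    · subst hjk
      rw [if_pos ⟨rfl, rfl⟩]
      simp only [Matrix.smul_apply, cyclicShiftAdj, cyclicShiftAdjEntry, of_apply, smul_eq_mul,
        eval_mul, eval_prod, eval_sub, eval_pow, eval_X, eval_C, adjugateEntry]
      have hval := ZMod.val_lt (i - h)
      rw [← pow_add, Nat.sub_add_cancel (by omega), mul_comm]
    · -- the cofactor of block `j` contains the vanishing factor `λₖ ^ m - λₖ ^ m`
      rw [if_neg fun h => hjk h.1, Matrix.smul_apply, smul_eq_mul, eval_mul, eval_prod,
        Finset.prod_eq_zero (Finset.mem_erase.mpr ⟨Ne.symm hjk, Finset.mem_univ k⟩), zero_mul]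
      simp
  · rw [blockDiagonal_apply_ne _ _ _ hjj', eval_zero, if_neg fun h => hjj' (h.1.trans h.2.symm)]

theorem adjugate_sub_Ltilde_mulVec (hlam : ∀ j, lam j ≠ 0) (k : Fin n) :
    (lam k • 1 - Ltilde m n lam).adjugate *ᵥ (fun p : ZMod m × Fin n => if p.1 = 0 then 1 else 0) =
      fun p => if p.2 = k then adjugateEntry m lam k else 0 := by
  ext p
  rw [adjugate_sub_Ltilde hlam, mulVec, dotProduct, Fintype.sum_prod_type,
    Finset.sum_eq_single 0 (fun h _ hh => by simp [hh]) (by simp), Finset.sum_eq_single k]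
  · by_cases hp : p.2 = k <;> simp [hp]
  · exact fun j _ hj => by simp [hj]
  · simp

theorem sum_Qtilde_zero_row (g : ZMod m → ℂ) (phi : Fin n → ℂ) (j k : Fin n) :
    ∑ h, Qtilde m n g lam phi (0, j) (h, k) = Qtilde m n g lam phi (0, j) (-1, k) := by
  refine Finset.sum_eq_single (-1) (fun h _ hh => ?_) (by simp)
  rw [Qtilde, of_apply, if_neg fun h0 => hh (eq_neg_of_add_eq_zero_left h0.symm)]

theorem Cfun_eq (hlam : ∀ j, lam j ≠ 0) (g : ZMod m → ℂ) (phi : Fin n → ℂ) (k : Fin n) :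
    Cfun m n g lam phi (lam k) =
      gAbs m g * adjugateEntry m lam k * ∑ j, Qtilde m n g lam phi (0, j) (-1, k) := by
  rw [Cfun, ← mulVec_mulVec, adjugate_sub_Ltilde_mulVec hlam, dotProduct, Fintype.sum_prod_type,
    Finset.sum_eq_single 0 (fun h _ hh => by simp [hh]) (by simp)]
  simp only [if_true, mulVec, dotProduct, Fintype.sum_prod_type, mul_ite, mul_zero,
    Finset.sum_ite_eq', Finset.mem_univ, ← Finset.sum_mul, sum_Qtilde_zero_row, ← Finset.mul_sum]
  ring

theorem Qtilde_zero_neg_one_of_ne (g : ZMod m → ℂ) (phi : Fin n → ℂ) {j k : Fin n} (hjk : j ≠ k) :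
    Qtilde m n g lam phi (0, j) (-1, k) =
      -gAbs m g * lam k ^ (m - 1) / (lam j ^ m - lam k ^ m) := by
  rw [Qtilde, of_apply, if_pos (neg_add_cancel 1).symm, if_neg (Ne.symm hjk),
    ZMod.val_neg_one_of_neZero, Nat.sub_sub_self (Nat.one_le_iff_ne_zero.mpr (NeZero.ne m)),
    Nat.sub_self, pow_zero, mul_one]

theorem sum_Qtilde_zero_neg_one (hlam : ∀ j, lam j ≠ 0) (g : ZMod m → ℂ) (phi : Fin n → ℂ)
    (k : Fin n) :
    ∑ j, Qtilde m n g lam phi (0, j) (-1, k) =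
      phi k + (cConst m g (-1) -
        gAbs m g * ∑ j ∈ Finset.univ.erase k, lam k ^ m / (lam j ^ m - lam k ^ m)) / lam k := by
  have hdiag : Qtilde m n g lam phi (0, k) (-1, k) = phi k + cConst m g (-1) / lam k := by
    rw [Qtilde, of_apply, if_pos (neg_add_cancel 1).symm, if_pos rfl]
  rw [← Finset.add_sum_erase _ _ (Finset.mem_univ k), hdiag, add_assoc, sub_div, sub_eq_add_neg,
    Finset.mul_sum, Finset.sum_div, ← Finset.sum_neg_distrib]
  congr 2
  refine Finset.sum_congr rfl fun j hj => ?_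
  rw [Qtilde_zero_neg_one_of_ne g phi (Finset.mem_erase.mp hj).1]
  field_simp [hlam k]
  rw [mul_assoc, pow_sub_one_mul (NeZero.ne m)]

end Sklyanin

theorem spinless_sklyanin_general (m n : ℕ) [NeZero m]
    (lam phi : Fin n → ℂ) (g : ZMod m → ℂ)
    (hlam : ∀ j, lam j ≠ 0)
    (hsep : ∀ j k : Fin n, j ≠ k → lam j ^ m ≠ lam k ^ m) (k : Fin n) :
    Cfun m n g lam phi (lam k) =
      gAbs m g * deriv (Afun m n lam) (lam k) *
        (phi k / m +
          (cConst m g ((m : ZMod m) - 1) / ((m : ℂ) * lam k) -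
            gAbs m g / ((m : ℂ) * lam k) *
              ∑ l ∈ Finset.univ.erase k, lam k ^ m / (lam l ^ m - lam k ^ m))) ∧
    (gAbs m g ≠ 0 →
      Cfun m n g lam phi (lam k) / (gAbs m g * deriv (Afun m n lam) (lam k)) =
        phi k / m +
          (cConst m g ((m : ZMod m) - 1) / ((m : ℂ) * lam k) -
            gAbs m g / ((m : ℂ) * lam k) *
              ∑ l ∈ Finset.univ.erase k, lam k ^ m / (lam l ^ m - lam k ^ m))) := by
  refine (fun h => ⟨h, fun hg => ?_⟩) ?_
  · have hm : (m : ℂ) ≠ 0 := Nat.cast_ne_zero.mpr (NeZero.ne m)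
    rw [Cfun_eq hlam, sum_Qtilde_zero_neg_one hlam, deriv_Afun hlam, ZMod.natCast_self, zero_sub]
    field_simp
  · rw [h, mul_div_cancel_left₀ _ (mul_ne_zero hg (deriv_Afun_ne_zero hlam hsep k))]

/-- Spinless generalized Sklyanin formula: for every `k`,
`C(λₖ) = |g| · A′(λₖ) · (φₖ/m + fₖ)` with
`fₖ = c_{m−1}/(m·λₖ) − (|g|/(m·λₖ))·Σ_{ℓ≠k} λₖ^m/(λ_ℓ^m − λₖ^m)`; in particular, if `|g| ≠ 0`,
then `θₖ := C(λₖ)/(|g|·A′(λₖ))` satisfies `θₖ = φₖ/m + fₖ`. -/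
theorem spinless_sklyanin (m n : ℕ) [NeZero m] (hn : 0 < n)
    (lam phi : Fin n → ℂ) (g : ZMod m → ℂ)
    (hlam : ∀ j, lam j ≠ 0)
    (hsep : ∀ j k : Fin n, j ≠ k → lam j ^ m ≠ lam k ^ m) (k : Fin n) :
    Cfun m n g lam phi (lam k) =
      gAbs m g * deriv (Afun m n lam) (lam k) *
        (phi k / m +
          (cConst m g ((m : ZMod m) - 1) / ((m : ℂ) * lam k) -
            gAbs m g / ((m : ℂ) * lam k) *
              ∑ l ∈ Finset.univ.erase k, lam k ^ m / (lam l ^ m - lam k ^ m))) ∧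
    (gAbs m g ≠ 0 →
      Cfun m n g lam phi (lam k) / (gAbs m g * deriv (Afun m n lam) (lam k)) =
        phi k / m +
          (cConst m g ((m : ZMod m) - 1) / ((m : ℂ) * lam k) -
            gAbs m g / ((m : ℂ) * lam k) *
              ∑ l ∈ Finset.univ.erase k, lam k ^ m / (lam l ^ m - lam k ^ m))) :=
  spinless_sklyanin_general m n lam phi g hlam hsep k
end
end

section
/- Assume m ≥ 2. Then for every z ∈ ℂ, C(z) = |g| · Σ_{j=1}^{n} Σ_{t=1}^{n} Q̃_{(0,j),(m−1,t)} · λ_t · z^{m−2} · ∏_{ℓ≠t} (z^m − λ_ℓ^m), where Q̃_{(0,j),(m−1,t)} denotes the entry of Q̃ in row (0,j) and column (m−1,t). -/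
open Matrix BigOperators

noncomputable section

/-!
The matrix `z • 1 - L̃` is block diagonal, with one block `z - λⱼ S` for each `j`, where `S`
is the cyclic shift on `ZMod m`. Such a block has determinant `z ^ m - λⱼ ^ m`, and multiplying
it by the matrix with entries `λⱼ ^ d * z ^ (m - 1 - d)`, `d = (i - h).val`, gives
`(z ^ m - λⱼ ^ m) • 1`. Hence the adjugate of `z • 1 - L̃` is block diagonal with blocks
`∏_{l ≠ j} (z ^ m - λₗ ^ m)` times that matrix. Since `Q̃` only has entries in rows `(i + 1, _)`
and columns `(i, _)`, the entry of `Q̃ · adj (z • 1 - L̃)` at `((0, j), (0, t))` only sees the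
column block `i = -1`, where the adjugate block contributes `λₜ * z ^ (m - 2)`.
-/

section ShiftBlock

variable {R : Type*} [CommRing R] {m : ℕ}

def shiftBlock (m : ℕ) (z a : R) : Matrix (ZMod m) (ZMod m) R :=
  of fun h i => (if i = h then z else 0) - (if i = h + 1 then a else 0)

def shiftBlockAdj (m : ℕ) (z a : R) : Matrix (ZMod m) (ZMod m) R :=
  of fun h i => a ^ (i - h).val * z ^ (m - 1 - (i - h).val)

theorem shiftBlock_mul_shiftBlockAdj [NeZero m] (z a : R) :
    shiftBlock m z a * shiftBlockAdj m z a =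
      (z ^ m - a ^ m) • (1 : Matrix (ZMod m) (ZMod m) R) := by
  ext h i
  have hrow : (shiftBlock m z a * shiftBlockAdj m z a) h i =
      z * shiftBlockAdj m z a h i - a * shiftBlockAdj m z a (h + 1) i := by
    simp [shiftBlock, mul_apply, sub_mul, Finset.sum_sub_distrib]
  rw [hrow, Matrix.smul_apply, one_apply, smul_eq_mul]
  simp only [shiftBlockAdj, of_apply]
  obtain ⟨k, rfl⟩ : ∃ k, m = k + 1 := ⟨m - 1, (Nat.succ_pred_eq_of_pos (NeZero.pos m)).symm⟩
  rcases eq_or_ne h i with rfl | hhi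
  · rw [sub_self, show h - (h + 1) = -1 by ring, ZMod.val_zero, ZMod.val_neg_one]
    simp only [pow_zero, Nat.add_sub_cancel, Nat.sub_zero, Nat.sub_self, if_true]
    ring
  · obtain ⟨d, hd⟩ : ∃ d, (i - h).val = d + 1 :=
      Nat.exists_eq_add_one.2 (Nat.pos_of_ne_zero fun h0 => hhi.symm (sub_eq_zero.1
        ((ZMod.val_eq_zero _).1 h0)))
    have hdk : d + 1 < k + 1 := hd ▸ ZMod.val_lt (i - h)
    have hpred : i - (h + 1) = (d : ZMod (k + 1)) := by
      rw [show i - (h + 1) = (i - h) - 1 by ring, ← ZMod.natCast_zmod_val (i - h), hd]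
      push_cast; ring
    rw [hd, hpred, ZMod.val_cast_of_lt (by omega), if_neg hhi,
      show k + 1 - 1 - d = (k + 1 - 1 - (d + 1)) + 1 by omega]
    ring

theorem ZMod.perm_eq_one_or_eq_subRight_one [NeZero m] {σ : Equiv.Perm (ZMod m)}
    (hσ : ∀ i, σ i = i ∨ σ i = i - 1) : σ = 1 ∨ σ = Equiv.subRight 1 := by
  by_contra! hne
  obtain ⟨i₀, hi₀⟩ : ∃ i, σ i ≠ i := not_forall.1 fun h => hne.1 (Equiv.ext h)
  have hpropagate : ∀ i, σ i = i - 1 → σ (i - 1) = i - 1 - 1 := by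
    intro i hi
    refine (hσ (i - 1)).elim (fun hfix => ?_) id
    have hi1 : i - 1 = i := σ.injective (hfix.trans hi.symm)
    rw [hfix, hi1, hi1]
  have shifted : ∀ k : ℕ, σ (i₀ - k) = i₀ - k - 1 := by
    intro k
    induction k with
    | zero => simpa using (hσ i₀).resolve_left hi₀
    | succ k ih => simpa [sub_sub] using hpropagate _ ih
  refine hne.2 (Equiv.ext fun i => ?_)
  simpa using shifted (i₀ - i).val

theorem ZMod.sign_subRight_one [NeZero m] (hm : 1 < m) :
    Equiv.Perm.sign (Equiv.subRight (1 : ZMod m)) = -(-1) ^ m := by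
  have : Fact (1 < m) := ⟨hm⟩
  have hmove : ∀ x : ZMod m, Equiv.subRight 1 x ≠ x := by simp
  have hcyc : Equiv.Perm.IsCycle (Equiv.subRight (1 : ZMod m)) := by
    refine ⟨0, hmove 0, fun y _ => ⟨((-y).val : ℕ), ?_⟩⟩
    rw [zpow_natCast,
      show Equiv.subRight (1 : ZMod m) = Equiv.addRight (-1) by ext; simp [sub_eq_add_neg]]
    simp
  rw [hcyc.sign, Finset.eq_univ_of_forall fun x => Equiv.Perm.mem_support.2 (hmove x),
    Finset.card_univ, ZMod.card]

theorem det_shiftBlock [NeZero m] (z a : R) : (shiftBlock m z a).det = z ^ m - a ^ m := by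
  obtain rfl | hm := (NeZero.one_le : 1 ≤ m).eq_or_lt
  · rw [det_unique]
    simp only [shiftBlock, of_apply, if_pos (Subsingleton.elim _ _)]
    ring
  have : Fact (1 < m) := ⟨hm⟩
  -- Only the identity and the cycle `i ↦ i - 1` contribute to the Leibniz expansion.
  have hvanish : ∀ σ : Equiv.Perm (ZMod m), σ ≠ 1 → σ ≠ Equiv.subRight 1 →
      ∏ i, shiftBlock m z a (σ i) i = 0 := by
    intro σ h1 hc
    obtain ⟨i, hi⟩ : ∃ i, ¬ (σ i = i ∨ σ i = i - 1) := by
      by_contra! h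
      exact (ZMod.perm_eq_one_or_eq_subRight_one h).elim h1 hc
    refine Finset.prod_eq_zero (Finset.mem_univ i) ?_
    push Not at hi
    have hshift : i ≠ σ i + 1 := fun h => hi.2 (eq_sub_of_add_eq h.symm)
    simp [shiftBlock, Ne.symm hi.1, hshift]
  have hdiag : ∏ i, shiftBlock m z a ((1 : Equiv.Perm (ZMod m)) i) i = z ^ m := by
    simp [shiftBlock]
  have hsub : ∀ i : ZMod m, i ≠ i - 1 := fun i h => one_ne_zero (sub_eq_self.1 h.symm)
  have hcycle : ∏ i, shiftBlock m z a (Equiv.subRight 1 i) i = (-a) ^ m := by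
    simp [shiftBlock, hsub]
  have hne : (1 : Equiv.Perm (ZMod m)) ≠ Equiv.subRight 1 := fun h =>
    hsub 0 (Equiv.ext_iff.1 h 0)
  have hleibniz : (shiftBlock m z a).det = ∑ σ ∈ {1, Equiv.subRight 1},
      Equiv.Perm.sign σ • ∏ i, shiftBlock m z a (σ i) i := by
    refine (det_apply _).trans (Finset.sum_subset (Finset.subset_univ _) fun σ _ hσ => ?_).symm
    simp only [Finset.mem_insert, Finset.mem_singleton, not_or] at hσ
    rw [hvanish σ hσ.1 hσ.2, smul_zero]
  rw [hleibniz, Finset.sum_pair hne, hdiag, hcycle, ZMod.sign_subRight_one hm,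
    Equiv.Perm.sign_one, one_smul, Units.smul_def, zsmul_eq_mul]
  have hsq : ((-1) ^ m * (-1) ^ m : R) = 1 := by rw [← mul_pow]; simp
  push_cast
  linear_combination (-a ^ m) * hsq

theorem map_shiftBlock {S : Type*} [CommRing S] (f : R →+* S) (z a : R) :
    (shiftBlock m z a).map f = shiftBlock m (f z) (f a) := by
  ext h i
  simp only [shiftBlock, map_apply, of_apply, map_sub, apply_ite f, map_zero]

theorem map_shiftBlockAdj {S : Type*} [CommRing S] (f : R →+* S) (z a : R) :
    (shiftBlockAdj m z a).map f = shiftBlockAdj m (f z) (f a) := by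
  ext h i
  simp only [shiftBlockAdj, map_apply, of_apply, map_mul, map_pow]

end ShiftBlock

theorem Matrix.adjugate_eq_of_mul_eq_det_smul_s7 {ι R : Type*} [Fintype ι] [DecidableEq ι]
    [CommRing R] {A B : Matrix ι ι R} (hA : IsLeftRegular A.det) (h : A * B = A.det • 1) :
    A.adjugate = B := by
  apply hA.matrix
  calc A.det • A.adjugate = A.adjugate * (A * B) := by rw [h, Matrix.mul_smul, Matrix.mul_one]
    _ = A.det • B := by rw [← Matrix.mul_assoc, adjugate_mul, Matrix.smul_mul, Matrix.one_mul]

section ShiftBlockDiagonal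

open Polynomial

variable {R : Type*} [CommRing R] {m : ℕ} {o : Type*} [DecidableEq o]

def shiftBlockDiagonal (m : ℕ) (z : R) (a : o → R) : Matrix (ZMod m × o) (ZMod m × o) R :=
  blockDiagonal fun j => shiftBlock m z (a j)

theorem map_shiftBlockDiagonal {S : Type*} [CommRing S] (f : R →+* S) (z : R) (a : o → R) :
    (shiftBlockDiagonal m z a).map f = shiftBlockDiagonal m (f z) (f ∘ a) := by
  simp only [shiftBlockDiagonal, blockDiagonal_map _ _ f.map_zero, map_shiftBlock,
    Function.comp_apply]

variable [Fintype o]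

def shiftBlockDiagonalAdj (m : ℕ) (z : R) (a : o → R) : Matrix (ZMod m × o) (ZMod m × o) R :=
  blockDiagonal fun j => (∏ l ∈ Finset.univ.erase j, (z ^ m - a l ^ m)) • shiftBlockAdj m z (a j)

theorem det_shiftBlockDiagonal [NeZero m] (z : R) (a : o → R) :
    (shiftBlockDiagonal m z a).det = ∏ l, (z ^ m - a l ^ m) := by
  simp only [shiftBlockDiagonal, det_blockDiagonal, det_shiftBlock]

theorem shiftBlockDiagonal_mul_shiftBlockDiagonalAdj [NeZero m] (z : R) (a : o → R) :
    shiftBlockDiagonal m z a * shiftBlockDiagonalAdj m z a = (∏ l, (z ^ m - a l ^ m)) • 1 := by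
  rw [shiftBlockDiagonal, shiftBlockDiagonalAdj, ← blockDiagonal_mul, ← blockDiagonal_one,
    ← blockDiagonal_smul]
  congr 1
  ext1 j
  rw [mul_smul_comm, shiftBlock_mul_shiftBlockAdj, smul_smul,
    Finset.prod_erase_mul _ _ (Finset.mem_univ j), Pi.smul_apply, Pi.one_apply]

theorem map_shiftBlockDiagonalAdj {S : Type*} [CommRing S] (f : R →+* S) (z : R) (a : o → R) :
    (shiftBlockDiagonalAdj m z a).map f = shiftBlockDiagonalAdj m (f z) (f ∘ a) := by
  simp only [shiftBlockDiagonalAdj, blockDiagonal_map _ _ f.map_zero,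
    Matrix.map_smul' _ _ _ (map_mul f), map_shiftBlockAdj, map_prod, map_sub, map_pow,
    Function.comp_apply]

theorem adjugate_shiftBlockDiagonal [NeZero m] (z : R) (a : o → R) :
    (shiftBlockDiagonal m z a).adjugate = shiftBlockDiagonalAdj m z a := by
  -- Over `R[X]` the determinant `∏ l, (X ^ m - C (a l) ^ m)` is monic, hence cancellable.
  have hgeneric : (shiftBlockDiagonal m (X : R[X]) (C ∘ a)).adjugate =
      shiftBlockDiagonalAdj m X (C ∘ a) := by
    refine adjugate_eq_of_mul_eq_det_smul_s7 ?_ ?_ <;> rw [det_shiftBlockDiagonal]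
    · refine (monic_prod_of_monic _ _ fun l _ => ?_).isRegular.left
      rw [Function.comp_apply, ← C_pow]
      exact monic_X_pow_sub_C _ (NeZero.ne m)
    · exact shiftBlockDiagonal_mul_shiftBlockDiagonalAdj _ _
  have hcomp : evalRingHom z ∘ C ∘ a = a := funext fun _ => eval_C
  have := congrArg (evalRingHom z).mapMatrix hgeneric
  rwa [RingHom.map_adjugate, RingHom.mapMatrix_apply, RingHom.mapMatrix_apply,
    map_shiftBlockDiagonal, map_shiftBlockDiagonalAdj, hcomp, coe_evalRingHom, eval_X] at this

theorem mul_shiftBlockDiagonalAdj_apply_zero [NeZero m] (hm : 2 ≤ m)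
    {Q : Matrix (ZMod m × o) (ZMod m × o) R} (hQ : ∀ p q, p.1 ≠ q.1 + 1 → Q p q = 0)
    (z : R) (a : o → R) (j t : o) :
    (Q * shiftBlockDiagonalAdj m z a) (0, j) (0, t) =
      Q (0, j) (-1, t) * a t * z ^ (m - 2) * ∏ l ∈ Finset.univ.erase t, (z ^ m - a l ^ m) := by
  have : Fact (1 < m) := ⟨hm⟩
  rw [mul_apply, Fintype.sum_prod_type, Finset.sum_eq_single (-1)]
  · simp only [shiftBlockDiagonalAdj, shiftBlockAdj, smul_of, blockDiagonal_apply, of_apply,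
      Pi.smul_apply, sub_neg_eq_add, zero_add, smul_eq_mul, mul_ite, mul_zero, Finset.sum_ite_eq',
      Finset.mem_univ, if_true]
    rw [ZMod.val_one, pow_one, show m - 1 - 1 = m - 2 by omega]
    ring
  · intro i _ hi
    refine Finset.sum_eq_zero fun k _ => ?_
    rw [hQ _ _ (fun h => hi (eq_neg_of_add_eq_zero_left h.symm)), zero_mul]
  · simp

end ShiftBlockDiagonal

theorem ite_fst_dotProduct_mulVec {R α o : Type*} [NonAssocSemiring R] [Fintype α] [DecidableEq α]
    [Fintype o] (M : Matrix (α × o) (α × o) R) (a₀ : α) (c : R) :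
    (fun p : α × o => if p.1 = a₀ then c else 0) ⬝ᵥ (M *ᵥ fun p => if p.1 = a₀ then 1 else 0) =
      c * ∑ j, ∑ t, M (a₀, j) (a₀, t) := by
  have hfst : ∀ f : α × o → R, ∑ p, (if p.1 = a₀ then f p else 0) = ∑ t, f (a₀, t) := by
    intro f
    rw [Fintype.sum_prod_type, Finset.sum_eq_single a₀ (fun b _ hb => by simp [hb]) (by simp)]
    simp
  simp only [dotProduct, mulVec, ite_mul, zero_mul, mul_ite, mul_one, mul_zero, hfst]
  rw [Finset.mul_sum]

theorem sub_Ltilde_eq_shiftBlockDiagonal (m n : ℕ) (lam : Fin n → ℂ) (z : ℂ) :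
    z • (1 : Matrix (ZMod m × Fin n) (ZMod m × Fin n) ℂ) - Ltilde m n lam =
      shiftBlockDiagonal m z lam := by
  ext ⟨h, j⟩ ⟨i, k⟩
  by_cases hjk : j = k
  · subst hjk
    simp [Ltilde, shiftBlockDiagonal, shiftBlock, one_apply, blockDiagonal_apply, eq_comm]
  · simp [Ltilde, shiftBlockDiagonal, one_apply, blockDiagonal_apply, hjk, Ne.symm hjk]

theorem Qtilde_apply_of_ne (m n : ℕ) (g : ZMod m → ℂ) (lam phi : Fin n → ℂ)
    (p q : ZMod m × Fin n) (h : p.1 ≠ q.1 + 1) : Qtilde m n g lam phi p q = 0 :=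
  if_neg h

theorem Cfun_formula_general (m n : ℕ) [NeZero m] (hm : 2 ≤ m)
    (lam phi : Fin n → ℂ) (g : ZMod m → ℂ) (z : ℂ) :
    Cfun m n g lam phi z =
      gAbs m g * ∑ j : Fin n, ∑ t : Fin n,
        Qtilde m n g lam phi (0, j) ((m : ZMod m) - 1, t) * lam t * z ^ (m - 2) *
          ∏ l ∈ Finset.univ.erase t, (z ^ m - lam l ^ m) := by
  rw [Cfun, sub_Ltilde_eq_shiftBlockDiagonal, adjugate_shiftBlockDiagonal,
    ite_fst_dotProduct_mulVec]
  simp only [mul_shiftBlockDiagonalAdj_apply_zero hm (Qtilde_apply_of_ne m n g lam phi),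
    ZMod.natCast_self, zero_sub]

/-- For `m ≥ 2`,
`C(z) = |g| · Σ_{j} Σ_{t} Q̃_{(0,j),(m−1,t)} · λ_t · z^{m−2} · ∏_{ℓ≠t} (z^m − λ_ℓ^m)`. -/
theorem Cfun_formula (m n : ℕ) [NeZero m] (hm : 2 ≤ m) (hn : 0 < n)
    (lam phi : Fin n → ℂ) (g : ZMod m → ℂ)
    (hlam : ∀ j, lam j ≠ 0)
    (hsep : ∀ j k : Fin n, j ≠ k → lam j ^ m ≠ lam k ^ m) (z : ℂ) :
    Cfun m n g lam phi z =
      gAbs m g * ∑ j : Fin n, ∑ t : Fin n,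
        Qtilde m n g lam phi (0, j) ((m : ZMod m) - 1, t) * lam t * z ^ (m - 2) *
          ∏ l ∈ Finset.univ.erase t, (z ^ m - lam l ^ m) :=
  Cfun_formula_general m n hm lam phi g z
end
end
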